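/- Let Γ be a commutative thick weakly distance-regular digraph in which C(q) exists. Then any circuit of length q containing an arc of type (1,q-1) consists entirely of arcs of types (1,q-1) and (1,q-2). -/

import Mathlib

/-!
Common framework: commutative thick weakly distance-regular digraphs.
-/

variable {V : Type*}

/-- There is a directed walk of length `n` from `x` to `y`. -/
def HasWalk (adj : V → V → Prop) (x y : V) (n : ℕ) : Prop :=
  ∃ f : ℕ → V, f 0 = x ∧ f n = y ∧ ∀ i < n, adj (f i) (f (i + 1))

/-- Directed distance `∂(x,y)`. -/
noncomputable def ddist (adj : V → V → Prop) (x y : V) : ℕ :=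
  sInf {n | HasWalk adj x y n}

/-- Two-way distance `∂̃(x,y) = (∂(x,y), ∂(y,x))`. -/
noncomputable def tdist (adj : V → V → Prop) (x y : V) : ℕ × ℕ :=
  (ddist adj x y, ddist adj y x)

/-- The pair `i` is an attained two-way distance, i.e. `i ∈ ∂̃(Γ)`. -/
def Attained (adj : V → V → Prop) (i : ℕ × ℕ) : Prop :=
  ∃ x y : V, tdist adj x y = i

/-- Intersection number `p^h_{i,j}`: for attained `h` it is the common cardinality of
`{z | ∂̃(x,z) = i, ∂̃(z,y) = j}` over pairs with `∂̃(x,y) = h` (and `0` otherwise). -/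
noncomputable def pnum (adj : V → V → Prop) (h i j : ℕ × ℕ) : ℕ :=
  sSup {n | ∃ x y : V, tdist adj x y = h ∧
    n = Set.ncard {z : V | tdist adj x z = i ∧ tdist adj z y = j}}

/-- Valency `k_i = |Γ_i(x)|`. -/
noncomputable def kval (adj : V → V → Prop) (i : ℕ × ℕ) : ℕ :=
  pnum adj (0, 0) i i.swap

/-- Adjacency of the subdigraph `Δ_J`: arcs of type `(1, t-1)` for `t ∈ J`. -/
def deltaAdj (adj : V → V → Prop) (J : Set ℕ) (u v : V) : Prop :=
  ∃ t ∈ J, tdist adj u v = (1, t - 1)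

/-- A circuit of length `s`. -/
def IsCircuit (adj : V → V → Prop) (s : ℕ) (f : ℕ → V) : Prop :=
  0 < s ∧ f s = f 0 ∧ ∀ i < s, adj (f i) (f (i + 1))

/-- Strongly connected. -/
def IsStrong (adj : V → V → Prop) : Prop :=
  ∀ x y : V, ∃ n, HasWalk adj x y n

/-- Weakly distance-regular: the intersection numbers are well defined. -/
def IsWDR (adj : V → V → Prop) : Prop :=
  ∀ (i j : ℕ × ℕ) (x y x' y' : V), tdist adj x y = tdist adj x' y' →
    Set.ncard {z : V | tdist adj x z = i ∧ tdist adj z y = j}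
      = Set.ncard {z : V | tdist adj x' z = i ∧ tdist adj z y' = j}

/-- Thick: `p^h_{i,i}, p^h_{i,i*} ∈ {0, k_i}`. -/
def IsThick (adj : V → V → Prop) : Prop :=
  ∀ h i : ℕ × ℕ,
    (pnum adj h i i = 0 ∨ pnum adj h i i = kval adj i) ∧
    (pnum adj h i i.swap = 0 ∨ pnum adj h i i.swap = kval adj i)

/-- A thick weakly distance-regular digraph (as a property of an adjacency relation). -/
def IsWDRThick (adj : V → V → Prop) : Prop :=
  IsStrong adj ∧ IsWDR adj ∧ IsThick adj

/-- A commutative thick weakly distance-regular digraph. -/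
structure CTWDR (V : Type*) [Fintype V] where
  adj : V → V → Prop
  loopless : ∀ v, ¬ adj v v
  strong : IsStrong adj
  wdr : IsWDR adj
  comm : ∀ (i j : ℕ × ℕ) (x y : V),
    Set.ncard {z : V | tdist adj x z = i ∧ tdist adj z y = j}
      = Set.ncard {z : V | tdist adj x z = j ∧ tdist adj z y = i}
  thick : IsThick adj

namespace CTWDR

variable {V : Type*} [Fintype V] (G : CTWDR V)

/-- Product `EF` of two sets of relations (relations identified with two-way distances). -/
def prodS (E F : Set (ℕ × ℕ)) : Set (ℕ × ℕ) :=
  {h | ∃ i ∈ E, ∃ j ∈ F, pnum G.adj h i j ≠ 0}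

/-- Powers `Γ_i^l` (with `Γ_i^0 = {Γ_{(0,0)}}` and `Γ_i^1 = {Γ_i}`). -/
def pow (i : ℕ × ℕ) : ℕ → Set (ℕ × ℕ)
  | 0 => {(0, 0)}
  | 1 => {i}
  | n + 2 => G.prodS (pow i (n + 1)) {i}

/-- The pair `(1, s-1)` is pure: every circuit of length `s` containing an arc of type
`(1, s-1)` consists of arcs of type `(1, s-1)`. -/
def Pure (s : ℕ) : Prop :=
  ∀ f : ℕ → V, IsCircuit G.adj s f →
    (∃ i < s, tdist G.adj (f i) (f (i + 1)) = (1, s - 1)) →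
    ∀ i < s, tdist G.adj (f i) (f (i + 1)) = (1, s - 1)

/-- `(1, s-1)` is mixed. -/
def Mixed (s : ℕ) : Prop := ¬ G.Pure s

/-- Configuration `C(q)` exists. -/
def Cexists (q : ℕ) : Prop :=
  pnum G.adj (1, q - 2) (1, q - 1) (1, q - 1) ≠ 0 ∧ G.Pure (q - 1)

/-- Configuration `D(q)` exists. -/
def Dexists (q : ℕ) : Prop :=
  pnum G.adj (1, q - 1) (1, q - 2) (q - 2, 1) ≠ 0 ∧ G.Pure (q - 1)

/-- A closed set of relations: `Γ_{i*}Γ_j ⊆ F` for all `i, j ∈ F`. -/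
def Closed (F : Set (ℕ × ℕ)) : Prop :=
  ∀ i ∈ F, ∀ j ∈ F, G.prodS {i.swap} {j} ⊆ F

/-- The minimal closed set `⟨F⟩` containing `F`. -/
def genClosed (F : Set (ℕ × ℕ)) : Set (ℕ × ℕ) :=
  ⋂₀ {C | F ⊆ C ∧ G.Closed C}

/-- The block `F_J(x)` of the closed set generated by `{Γ_{1,t-1}}_{t ∈ J}`. -/
def block (J : Set ℕ) (x : V) : Set V :=
  {y | tdist G.adj x y ∈ G.genClosed {i | ∃ t ∈ J, i = (1, t - 1)}}

end CTWDR

/-!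
Write `i = (1,q-1)` and `h = (1,q-2)`, and walk along the circuit starting from an arc of
type `i`; for consecutive arcs `(a,b)`, `(b,c)` with `(a,b)` of type `i` or `h` we show that
`(b,c)` is of type `i` or `h`. Here `∂(c,a) ≤ q-2` along the circuit and `∂(a,c) ≤ 2`.
Thickness upgrades `p^h_{i,i} ≠ 0` to `p^h_{i,i} = k_i`: whenever `∂̃(x,y) = h`, every `w`
with `∂̃(x,w) = i` has `∂̃(w,y) = i`. Purity of `h` forces the arc following an `h`-arc on a
circuit of length `q-1` to be an `h`-arc. Together they give `p^{(2,q-2)}_{i,h} ≠ 0`, which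
handles `∂(a,c) = 2`. If `(a,b)` and the chord `(a,c)` both have type `h`, the circuit
shortcut through the chord has length `q-1` and contains the first arc, of type `i`,
contradicting purity.
-/

section Walks

variable {V : Type*} {adj : V → V → Prop}

lemma hasWalk_zero (x : V) : HasWalk adj x x 0 :=
  ⟨fun _ => x, rfl, rfl, fun _ h => absurd h (Nat.not_lt_zero _)⟩

lemma hasWalk_one_of_adj {x y : V} (h : adj x y) : HasWalk adj x y 1 :=
  ⟨fun n => if n = 0 then x else y, rfl, rfl, fun i hi => by
    obtain rfl : i = 0 := by omega
    simpa using h⟩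

lemma HasWalk.append {x y z : V} {m n : ℕ} (h₁ : HasWalk adj x y m) (h₂ : HasWalk adj y z n) :
    HasWalk adj x z (m + n) := by
  obtain ⟨f, rfl, rfl, hf⟩ := h₁
  obtain ⟨g, hg0, rfl, hg⟩ := h₂
  refine ⟨fun i => if i ≤ m then f i else g (i - m), by simp, ?_, fun i hi => ?_⟩
  · rcases n.eq_zero_or_pos with rfl | hn
    · simp [hg0]
    · simp [show ¬ m + n ≤ m by omega]
  · rcases lt_or_ge i m with him | hmi
    · simp only [him.le, show i + 1 ≤ m by omega, if_true]
      exact hf i him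
    · have hg' := hg (i - m) (by omega)
      rw [show i - m + 1 = i + 1 - m by omega] at hg'
      rcases hmi.eq_or_lt with rfl | hmi
      · simpa [hg0] using hg'
      · simpa [show ¬ i ≤ m by omega, show ¬ i + 1 ≤ m by omega] using hg'

lemma HasWalk.exists_adj {x y : V} {n : ℕ} (h : HasWalk adj x y (n + 1)) :
    ∃ c, adj x c ∧ HasWalk adj c y n := by
  obtain ⟨f, rfl, rfl, hf⟩ := h
  exact ⟨f 1, hf 0 n.succ_pos, fun i => f (i + 1), rfl, rfl, fun i hi => hf (i + 1) (by omega)⟩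

lemma hasWalk_of_adj_succ {P : ℕ → V} (hP : ∀ t, adj (P t) (P (t + 1))) (u l : ℕ) :
    HasWalk adj (P u) (P (u + l)) l :=
  ⟨fun n => P (u + n), rfl, rfl, fun n _ => hP (u + n)⟩

lemma IsCircuit.apply_mod_of_le {q : ℕ} {f : ℕ → V} (hf : IsCircuit adj q f) {m : ℕ}
    (hm : m ≤ q) : f (m % q) = f m := by
  rcases hm.lt_or_eq with hm | rfl
  · rw [Nat.mod_eq_of_lt hm]
  · rw [Nat.mod_self, hf.2.1]

lemma IsCircuit.adj_mod {q : ℕ} {f : ℕ → V} (hf : IsCircuit adj q f) (n : ℕ) :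
    adj (f (n % q)) (f ((n + 1) % q)) := by
  have hlt : n % q < q := Nat.mod_lt _ hf.1
  rw [← Nat.mod_add_mod, hf.apply_mod_of_le hlt]
  exact hf.2.2 _ hlt

end Walks

section Dist

variable {V : Type*} {adj : V → V → Prop}

lemma ddist_le_of_hasWalk {x y : V} {n : ℕ} (h : HasWalk adj x y n) : ddist adj x y ≤ n :=
  Nat.sInf_le h

lemma hasWalk_ddist (hs : IsStrong adj) (x y : V) : HasWalk adj x y (ddist adj x y) :=
  Nat.sInf_mem (hs x y)

lemma ddist_triangle (hs : IsStrong adj) (x y z : V) :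
    ddist adj x z ≤ ddist adj x y + ddist adj y z :=
  ddist_le_of_hasWalk ((hasWalk_ddist hs x y).append (hasWalk_ddist hs y z))

lemma ddist_self (x : V) : ddist adj x x = 0 :=
  Nat.le_zero.mp (ddist_le_of_hasWalk (hasWalk_zero x))

lemma eq_of_ddist_eq_zero (hs : IsStrong adj) {x y : V} (h : ddist adj x y = 0) : x = y := by
  obtain ⟨f, rfl, hf, -⟩ := h ▸ hasWalk_ddist hs x y
  exact hf

lemma ddist_eq_zero_comm (hs : IsStrong adj) {x y : V} :
    ddist adj x y = 0 ↔ ddist adj y x = 0 := by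
  constructor <;> intro h <;> rw [eq_of_ddist_eq_zero hs h, ddist_self]

lemma adj_of_ddist_eq_one (hs : IsStrong adj) {x y : V} (h : ddist adj x y = 1) : adj x y := by
  obtain ⟨f, rfl, rfl, hf⟩ := h ▸ hasWalk_ddist hs x y
  exact hf 0 one_pos

lemma ddist_eq_one_of_adj (hl : ∀ v, ¬ adj v v) (hs : IsStrong adj) {x y : V} (h : adj x y) :
    ddist adj x y = 1 := by
  have hle := ddist_le_of_hasWalk (hasWalk_one_of_adj h)
  have hne : ddist adj x y ≠ 0 := fun h0 => hl y (eq_of_ddist_eq_zero hs h0 ▸ h)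
  omega

lemma tdist_self (x : V) : tdist adj x x = (0, 0) := by
  rw [tdist, ddist_self]

lemma tdist_eq_iff {x y : V} {m n : ℕ} :
    tdist adj x y = (m, n) ↔ ddist adj x y = m ∧ ddist adj y x = n := by
  rw [tdist, Prod.mk.injEq]

end Dist

section IntersectionNumbers

variable {V : Type*} {adj : V → V → Prop}

lemma attained_of_pnum_ne_zero {g a b : ℕ × ℕ} (h : pnum adj g a b ≠ 0) :
    Attained adj g := by
  by_contra hg
  refine h ?_
  have hempty : {n | ∃ x y : V, tdist adj x y = g ∧
      n = {z | tdist adj x z = a ∧ tdist adj z y = b}.ncard} = ∅ :=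
    Set.eq_empty_of_forall_notMem fun _ ⟨x, y, hxy, _⟩ => hg ⟨x, y, hxy⟩
  rw [pnum, hempty, csSup_empty, Nat.bot_eq_zero]

lemma pnum_eq_ncard (hw : IsWDR adj) {g a b : ℕ × ℕ} {x y : V} (hxy : tdist adj x y = g) :
    pnum adj g a b = {z | tdist adj x z = a ∧ tdist adj z y = b}.ncard := by
  have hset : {n | ∃ x' y' : V, tdist adj x' y' = g ∧
      n = {z | tdist adj x' z = a ∧ tdist adj z y' = b}.ncard}
      = {{z | tdist adj x z = a ∧ tdist adj z y = b}.ncard} := by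
    ext n
    refine ⟨?_, fun hn => ⟨x, y, hxy, hn⟩⟩
    rintro ⟨x', y', hxy', rfl⟩
    exact hw a b x' y' x y (hxy'.trans hxy.symm)
  rw [pnum, hset, csSup_singleton]

lemma exists_mid_of_pnum_ne_zero (hw : IsWDR adj) {g a b : ℕ × ℕ} {x y : V}
    (h : pnum adj g a b ≠ 0) (hxy : tdist adj x y = g) :
    ∃ z, tdist adj x z = a ∧ tdist adj z y = b := by
  rw [pnum_eq_ncard hw hxy] at h
  exact Set.nonempty_of_ncard_ne_zero h

lemma pnum_ne_zero_of_mid [Finite V] (hw : IsWDR adj) {g a b : ℕ × ℕ} {x y z : V}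
    (hxy : tdist adj x y = g) (hxz : tdist adj x z = a) (hzy : tdist adj z y = b) :
    pnum adj g a b ≠ 0 := by
  rw [pnum_eq_ncard hw hxy]
  exact Nat.pos_iff_ne_zero.mp ((Set.ncard_pos (Set.toFinite _)).mpr ⟨z, hxz, hzy⟩)

lemma kval_eq_ncard (hw : IsWDR adj) (a : ℕ × ℕ) (x : V) :
    kval adj a = {z | tdist adj x z = a}.ncard := by
  rw [kval, pnum_eq_ncard hw (tdist_self x)]
  congr 1
  ext z
  exact ⟨And.left, fun h => ⟨h, h ▸ rfl⟩⟩

lemma tdist_eq_of_pnum_ne_zero [Finite V] (hw : IsWDR adj) (ht : IsThick adj)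
    {g a : ℕ × ℕ} {x y w : V} (hp : pnum adj g a a ≠ 0) (hxy : tdist adj x y = g)
    (hxw : tdist adj x w = a) : tdist adj w y = a := by
  have hmid : {z | tdist adj x z = a ∧ tdist adj z y = a} = {z | tdist adj x z = a} := by
    refine Set.eq_of_subset_of_ncard_le (fun z hz => hz.1) ?_ (Set.toFinite _)
    rw [← kval_eq_ncard hw, ← pnum_eq_ncard hw hxy, (ht g a).1.resolve_left hp]
  exact (hmid.symm ▸ hxw : w ∈ {z | tdist adj x z = a ∧ tdist adj z y = a}).2

end IntersectionNumbers

namespace CTWDR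

variable {V : Type*} [Fintype V] {G : CTWDR V}

lemma pnum_comm (g a b : ℕ × ℕ) : pnum G.adj g a b = pnum G.adj g b a := by
  unfold pnum
  congr 1
  ext n
  constructor <;> rintro ⟨x, y, hxy, rfl⟩
  exacts [⟨x, y, hxy, G.comm a b x y⟩, ⟨x, y, hxy, G.comm b a x y⟩]

lemma Pure.tdist_of_walk {s : ℕ} (hs : G.Pure s) {a b : V} (hab : tdist G.adj a b = (1, s - 1))
    {g : ℕ → V} (hg0 : g 0 = b) (hga : g (s - 1) = a)
    (hg : ∀ i < s - 1, G.adj (g i) (g (i + 1))) :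
    ∀ i < s - 1, tdist G.adj (g i) (g (i + 1)) = (1, s - 1) := by
  intro i hi
  let F : ℕ → V := fun n => if n < s then g n else b
  have hF : ∀ n < s, F n = g n := fun n hn => if_pos hn
  have hFs : F s = b := if_neg (lt_irrefl s)
  have hlast : F (s - 1) = a ∧ F (s - 1 + 1) = b := by
    rw [hF _ (by omega), hga, show s - 1 + 1 = s by omega, hFs]
    exact ⟨rfl, rfl⟩
  have hcirc : IsCircuit G.adj s F := by
    refine ⟨by omega, by rw [hFs, hF 0 (by omega), hg0], fun n hn => ?_⟩
    rcases (Nat.le_sub_one_of_lt hn).lt_or_eq with hn' | rfl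
    · rw [hF n hn, hF (n + 1) (by omega)]
      exact hg n hn'
    · rw [hlast.1, hlast.2]
      exact adj_of_ddist_eq_one G.strong (tdist_eq_iff.mp hab).1
  have := hs F hcirc ⟨s - 1, by omega, by rw [hlast.1, hlast.2, hab]⟩ i (by omega)
  rwa [hF i (by omega), hF (i + 1) (by omega)] at this

lemma Pure.tdist_of_adj_of_hasWalk {s : ℕ} (hs : G.Pure s) {a b c : V}
    (hab : tdist G.adj a b = (1, s - 1)) (hbc : G.adj b c) (hca : HasWalk G.adj c a (s - 2)) :
    tdist G.adj b c = (1, s - 1) := by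
  obtain ⟨dab, dba⟩ := tdist_eq_iff.mp hab
  have hs2 : 2 ≤ s := by
    have : ddist G.adj b a ≠ 0 := (ddist_eq_zero_comm G.strong).not.mp (by omega)
    omega
  obtain ⟨w, rfl, hwa, hw⟩ := hca
  let g : ℕ → V := fun
    | 0 => b
    | n + 1 => w n
  have hg : ∀ i < s - 1, G.adj (g i) (g (i + 1)) := fun
    | 0, _ => hbc
    | n + 1, hn => hw n (by omega)
  exact hs.tdist_of_walk hab (g := g) rfl
    (by rw [show s - 1 = s - 2 + 1 by omega]; exact hwa) hg 0 (by omega)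

/-- The chord `(P n, P (n + 2))` shortcuts the circuit `P` to one of length `q - 1` through
the arc `(P 0, P 1)`. -/
lemma Pure.tdist_zero_of_chord {q : ℕ} (hs : G.Pure (q - 1)) {P : ℕ → V}
    (hper : Function.Periodic P q) (hP : ∀ t, G.adj (P t) (P (t + 1))) {n : ℕ} (hn : 1 ≤ n)
    (hnq : n + 2 ≤ q) (hchord : tdist G.adj (P n) (P (n + 2)) = (1, q - 2)) :
    tdist G.adj (P 0) (P 1) = (1, q - 2) := by
  have key := hs.tdist_of_walk (g := fun k => P (n + 2 + k)) (by rwa [Nat.sub_sub]) rfl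
    (by rw [show n + 2 + (q - 1 - 1) = n + q by omega, hper]) (fun k _ => hP _)
    (q - 2 - n) (by omega)
  rwa [show n + 2 + (q - 2 - n) = 0 + q by omega, hper,
    show n + 2 + (q - 2 - n + 1) = 1 + q by omega, hper, Nat.sub_sub] at key

lemma tdist_eq_or_of_adj {q : ℕ} {b c : V} (hbc : G.adj b c) (hlo : q - 2 ≤ ddist G.adj c b)
    (hhi : ddist G.adj c b ≤ q - 1) :
    tdist G.adj b c = (1, q - 1) ∨ tdist G.adj b c = (1, q - 2) := by
  have dbc := ddist_eq_one_of_adj G.loopless G.strong hbc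
  rcases (by omega : ddist G.adj c b = q - 1 ∨ ddist G.adj c b = q - 2) with h | h
  exacts [Or.inl (tdist_eq_iff.mpr ⟨dbc, h⟩), Or.inr (tdist_eq_iff.mpr ⟨dbc, h⟩)]

variable {q : ℕ}

lemma Cexists.three_le (hC : G.Cexists q) : 3 ≤ q := by
  obtain ⟨x, y, hxy⟩ := attained_of_pnum_ne_zero hC.1
  obtain ⟨dxy, dyx⟩ := tdist_eq_iff.mp hxy
  have : ddist G.adj y x ≠ 0 := (ddist_eq_zero_comm G.strong).not.mpr (by omega)
  omega

/-- Witnessed by the pair `(m, c)` with mid-vertex `y`, where `(x, m, y)` is a triangle of types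
`i, i, h` given by `C(q)` and `c` follows `y` on a geodesic from `y` to `x`. -/
lemma Cexists.pnum_two_ne_zero (hC : G.Cexists q) :
    pnum G.adj (2, q - 2) (1, q - 1) (1, q - 2) ≠ 0 := by
  have hq := hC.three_le
  obtain ⟨x, y, hxy⟩ := attained_of_pnum_ne_zero hC.1
  obtain ⟨m, hxm, hmy⟩ := exists_mid_of_pnum_ne_zero G.wdr hC.1 hxy
  obtain ⟨c, hyc, hcx⟩ : ∃ c, G.adj y c ∧ HasWalk G.adj c x (q - 3) := by
    have hw := hasWalk_ddist G.strong y x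
    rw [(tdist_eq_iff.mp hxy).2, show q - 2 = q - 3 + 1 by omega] at hw
    exact hw.exists_adj
  have hyc' : tdist G.adj y c = (1, q - 2) := by
    simpa [Nat.sub_sub] using hC.2.tdist_of_adj_of_hasWalk (by simpa [Nat.sub_sub] using hxy)
      hyc (by simpa [Nat.sub_sub] using hcx)
  obtain ⟨dxm, -⟩ := tdist_eq_iff.mp hxm
  obtain ⟨dmy, dym⟩ := tdist_eq_iff.mp hmy
  obtain ⟨dyc, -⟩ := tdist_eq_iff.mp hyc'
  have dcx := ddist_le_of_hasWalk hcx
  have dcm : ddist G.adj c m = q - 2 := by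
    have := ddist_triangle G.strong c x m
    have := ddist_triangle G.strong y c m
    omega
  have dmc : ddist G.adj m c = 2 := by
    have := ddist_triangle G.strong m y c
    have h0 : ddist G.adj m c ≠ 0 := (ddist_eq_zero_comm G.strong).not.mpr (by omega)
    have h1 : ddist G.adj m c ≠ 1 := fun h => by
      have := tdist_eq_of_pnum_ne_zero G.wdr G.thick hC.1 (tdist_eq_iff.mpr ⟨h, dcm⟩) hmy
      rw [hyc', Prod.mk.injEq] at this
      omega
    omega
  exact pnum_ne_zero_of_mid G.wdr (tdist_eq_iff.mpr ⟨dmc, dcm⟩) hmy hyc'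

lemma Cexists.tdist_next_of_tdist_eq_sub_one (hC : G.Cexists q) {a b c : V}
    (hab : tdist G.adj a b = (1, q - 1)) (hbc : G.adj b c) (hca : ddist G.adj c a ≤ q - 2) :
    tdist G.adj b c = (1, q - 1) ∨ tdist G.adj b c = (1, q - 2) := by
  have hq := hC.three_le
  obtain ⟨dab, dba⟩ := tdist_eq_iff.mp hab
  have dbc := ddist_eq_one_of_adj G.loopless G.strong hbc
  have dca : ddist G.adj c a = q - 2 := by
    have := ddist_triangle G.strong b c a
    omega
  have dcb : ddist G.adj c b ≤ q - 1 := by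
    have := ddist_triangle G.strong c a b
    omega
  refine tdist_eq_or_of_adj hbc ?_ dcb
  have dac : ddist G.adj a c ≤ 2 := by
    have := ddist_triangle G.strong a b c
    omega
  have : ddist G.adj a c ≠ 0 := (ddist_eq_zero_comm G.strong).not.mpr (by omega)
  rcases (by omega : ddist G.adj a c = 1 ∨ ddist G.adj a c = 2) with dac | dac
  · have hbc' := tdist_eq_of_pnum_ne_zero G.wdr G.thick hC.1 (tdist_eq_iff.mpr ⟨dac, dca⟩) hab
    have := (tdist_eq_iff.mp hbc').2
    omega
  · obtain ⟨u, hau, huc⟩ := exists_mid_of_pnum_ne_zero G.wdr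
      (by rw [pnum_comm]; exact hC.pnum_two_ne_zero) (tdist_eq_iff.mpr ⟨dac, dca⟩)
    have hbu := tdist_eq_of_pnum_ne_zero G.wdr G.thick hC.1 hau hab
    have := ddist_triangle G.strong u c b
    have := (tdist_eq_iff.mp hbu).2
    have := (tdist_eq_iff.mp huc).1
    omega

lemma Cexists.tdist_next_of_tdist_eq_sub_two (hC : G.Cexists q) {a b c : V}
    (hab : tdist G.adj a b = (1, q - 2)) (hbc : G.adj b c) (hca : ddist G.adj c a ≤ q - 2)
    (hac : tdist G.adj a c ≠ (1, q - 2)) :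
    tdist G.adj b c = (1, q - 1) ∨ tdist G.adj b c = (1, q - 2) := by
  have hq := hC.three_le
  obtain ⟨dab, dba⟩ := tdist_eq_iff.mp hab
  rcases hca.lt_or_eq with hca | dca
  · have dca : ddist G.adj c a = q - 1 - 2 := by
      have := ddist_triangle G.strong b c a
      rw [ddist_eq_one_of_adj G.loopless G.strong hbc] at this
      omega
    right
    simpa [Nat.sub_sub] using hC.2.tdist_of_adj_of_hasWalk (by simpa [Nat.sub_sub] using hab)
      hbc (dca ▸ hasWalk_ddist G.strong c a)
  · have dac : ddist G.adj a c ≤ 2 := by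
      have := ddist_triangle G.strong a b c
      rw [ddist_eq_one_of_adj G.loopless G.strong hbc] at this
      omega
    have : ddist G.adj a c ≠ 0 := (ddist_eq_zero_comm G.strong).not.mpr (by omega)
    have : ddist G.adj a c ≠ 1 := fun h => hac (tdist_eq_iff.mpr ⟨h, dca⟩)
    obtain ⟨v, hav, hvc⟩ := exists_mid_of_pnum_ne_zero G.wdr hC.pnum_two_ne_zero
      (tdist_eq_iff.mpr ⟨(by omega : ddist G.adj a c = 2), dca⟩)
    have hvb := tdist_eq_of_pnum_ne_zero G.wdr G.thick hC.1 hab hav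
    exact Or.inl (tdist_eq_of_pnum_ne_zero G.wdr G.thick hC.1 hvc hvb)

lemma Cexists.tdist_of_periodic_of_tdist_zero (hC : G.Cexists q) {P : ℕ → V}
    (hper : Function.Periodic P q) (hP : ∀ t, G.adj (P t) (P (t + 1)))
    (h0 : tdist G.adj (P 0) (P 1) = (1, q - 1)) :
    ∀ t < q, tdist G.adj (P t) (P (t + 1)) = (1, q - 1) ∨
      tdist G.adj (P t) (P (t + 1)) = (1, q - 2) := by
  have hq := hC.three_le
  have hne : ((1 : ℕ), q - 1) ≠ (1, q - 2) := by
    rw [Ne, Prod.mk.injEq]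
    omega
  intro t
  induction t with
  | zero => exact fun _ => Or.inl h0
  | succ s ih =>
    intro hs
    have hca : ddist G.adj (P (s + 2)) (P s) ≤ q - 2 := by
      have := ddist_le_of_hasWalk (hasWalk_of_adj_succ hP (s + 2) (q - 2))
      rwa [show s + 2 + (q - 2) = s + q by omega, hper] at this
    rcases ih (by omega) with hab | hab
    · exact hC.tdist_next_of_tdist_eq_sub_one hab (hP _) hca
    · have hs0 : 1 ≤ s := Nat.pos_of_ne_zero fun h => by
        subst h
        exact hne (h0.symm.trans hab)
      exact hC.tdist_next_of_tdist_eq_sub_two hab (hP _) hca fun hac =>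
        hne (h0.symm.trans (hC.2.tdist_zero_of_chord hper hP hs0 (by omega) hac))

lemma Cexists.tdist_of_periodic (hC : G.Cexists q) {P : ℕ → V}
    (hper : Function.Periodic P q) (hP : ∀ t, G.adj (P t) (P (t + 1))) {m : ℕ} (hm : m < q)
    (harc : tdist G.adj (P m) (P (m + 1)) = (1, q - 1)) {t : ℕ} (ht : t < q) :
    tdist G.adj (P t) (P (t + 1)) = (1, q - 1) ∨ tdist G.adj (P t) (P (t + 1)) = (1, q - 2) := by
  have key := hC.tdist_of_periodic_of_tdist_zero (P := fun n => P (m + n))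
    (fun n => by simp only [← add_assoc, hper (m + n)]) (fun n => hP (m + n)) harc
  rcases le_or_gt m t with hmt | htm
  · simpa only [← add_assoc, Nat.add_sub_cancel' hmt] using key (t - m) (by omega)
  · have := key (t + q - m) (by omega)
    rwa [show m + (t + q - m) = t + q by omega, show m + (t + q - m + 1) = t + 1 + q by omega,
      hper, hper] at this

end CTWDR

/-- Lemma 2.5(iii): if `C(q)` exists, any circuit of length `q`
containing an arc of type `(1,q-1)` consists of arcs of types `(1,q-1)` and `(1,q-2)`. -/
theorem stmt6 {V : Type*} [Fintype V] (G : CTWDR V) (q : ℕ) (hC : G.Cexists q)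
    (f : ℕ → V) (hcir : IsCircuit G.adj q f)
    (harc : ∃ i < q, tdist G.adj (f i) (f (i + 1)) = (1, q - 1)) :
    ∀ i < q, tdist G.adj (f i) (f (i + 1)) = (1, q - 1) ∨
      tdist G.adj (f i) (f (i + 1)) = (1, q - 2) := by
  obtain ⟨i₀, hi₀, harc⟩ := harc
  have hext : ∀ t < q,
      tdist G.adj (f (t % q)) (f ((t + 1) % q)) = tdist G.adj (f t) (f (t + 1)) := by
    intro t ht
    rw [hcir.apply_mod_of_le ht.le, hcir.apply_mod_of_le ht]
  intro t ht
  rw [← hext t ht]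
  exact hC.tdist_of_periodic (P := fun n => f (n % q)) (fun n => by simp) hcir.adj_mod hi₀
    (by rwa [hext i₀ hi₀]) ht
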